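/- arXiv:1709.00987 — 2 statements merged into one kernel-verified Lean document; each statement's English description precedes it below -/
import Mathlib

section
/- Let a_1, …, a_l be complex numbers that are linearly independent over ℤ, i.e. if n_1 a_1 + ⋯ + n_l a_l = 0 with n_1,…,n_l ∈ ℤ then n_1 = ⋯ = n_l = 0 (equivalently, they are linearly independent over ℚ). Then the functions t ↦ e^{a_1 t}, …, t ↦ e^{a_l t} on ℂ are algebraically independent over ℂ; that is, for every nonzero polynomial P in l variables with complex coefficients there exists t ∈ ℂ such that P(e^{a_1 t},…,e^{a_l t}) ≠ 0. -/
noncomputable def expChar (c : ℂ) : Multiplicative ℂ →* ℂ where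
  toFun t := Complex.exp (c * Multiplicative.toAdd t)
  map_one' := by simp
  map_mul' x y := by
    simp [mul_add, Complex.exp_add]

lemma expChar_inj : Function.Injective expChar := by
  intro c c' h
  by_contra hne
  have hsub : c - c' ≠ 0 := sub_ne_zero.mpr hne
  have := congrArg (fun f : Multiplicative ℂ →* ℂ =>
    f (Multiplicative.ofAdd ((Real.pi * Complex.I) / (c - c')))) h
  simp only [expChar, MonoidHom.coe_mk, OneHom.coe_mk, toAdd_ofAdd] at this
  have h1 : Complex.exp ((c - c') * ((Real.pi * Complex.I) / (c - c'))) = 1 := by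
    rw [sub_mul, Complex.exp_sub, this, div_self]
    exact Complex.exp_ne_zero _
  rw [mul_div_cancel₀ _ hsub, Complex.exp_pi_mul_I] at h1
  norm_num at h1

/-- Let `a 0, …, a (l-1)` be complex numbers linearly independent over `ℤ`
(equivalently over `ℚ`). Then the functions `t ↦ exp (a i · t)` are algebraically independent
over `ℂ`: for every nonzero polynomial `P` in `l` variables with complex coefficients there is
`t ∈ ℂ` with `P (exp (a 0 · t), …, exp (a (l-1) · t)) ≠ 0`. -/
theorem stmt_1 (l : ℕ) (a : Fin l → ℂ)
    (hind : ∀ n : Fin l → ℤ, (∑ i, (n i : ℂ) * a i) = 0 → ∀ i, n i = 0)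
    (P : MvPolynomial (Fin l) ℂ) (hP : P ≠ 0) :
    ∃ t : ℂ, MvPolynomial.eval (fun i => Complex.exp (a i * t)) P ≠ 0 := by
  by_contra h
  push_neg at h
  set c : (Fin l →₀ ℕ) → ℂ := fun d => ∑ i, (d i : ℂ) * a i with hc
  have hcinj : Function.Injective c := by
    intro d e hde
    have h0 : (∑ i, (((d i : ℤ) - (e i : ℤ) : ℤ) : ℂ) * a i) = 0 := by
      push_cast
      simp only [sub_mul, Finset.sum_sub_distrib]
      rw [show (∑ i, (d i : ℂ) * a i) = c d from rfl,
        show (∑ i, (e i : ℂ) * a i) = c e from rfl, hde, sub_self]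
    have := hind (fun i => (d i : ℤ) - (e i : ℤ)) h0
    ext i
    have h2 := sub_eq_zero.mp (this i)
    exact_mod_cast h2
  have hLI : LinearIndependent ℂ (fun d : Fin l →₀ ℕ => ⇑(expChar (c d))) := by
    have := linearIndependent_monoidHom (Multiplicative ℂ) ℂ
    exact this.comp (fun d => expChar (c d)) (expChar_inj.comp hcinj)
  have hz : ∑ d ∈ P.support, (MvPolynomial.coeff d P) • ⇑(expChar (c d)) = 0 := by
    funext t
    have ht := h (Multiplicative.toAdd t)
    rw [MvPolynomial.eval_eq'] at ht
    simp only [Finset.sum_apply, Pi.smul_apply, Pi.zero_apply, smul_eq_mul, expChar,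
      MonoidHom.coe_mk, OneHom.coe_mk]
    rw [← ht]
    refine Finset.sum_congr rfl fun d _ => ?_
    congr 1
    rw [hc]
    simp only
    rw [Finset.sum_mul, Complex.exp_sum]
    refine Finset.prod_congr rfl fun i _ => ?_
    rw [← Complex.exp_nat_mul]
    ring_nf
  have hcoeff := linearIndependent_iff'.mp hLI P.support (fun d => MvPolynomial.coeff d P) hz
  apply hP
  ext d
  by_cases hd : d ∈ P.support
  · simpa using hcoeff d hd
  · simpa using (MvPolynomial.notMem_support_iff.mp hd)
end

section
/- With the notation below: (1) μ = μ_a ∘ μ_{a−1} ∘ ⋯ ∘ μ_2 ∘ μ_1, and this expression of μ as a composition of a·b adjacent transpositions is reduced, i.e. ℓ(μ) = a·b. (2) For 1 ≤ i ≤ a and 1 ≤ r ≤ b, let l = a+i+r−1 if r ≥ 2, and l = a+b+i+1 if r = 1 and i ≤ a−1. Then w_{i,r} sends the simple root e_{l−1}−e_l to a negative root different from −(e_{l−1}−e_l); explicitly, w_{i,r}(l−1) > w_{i,r}(l), and it is not the case that both w_{i,r}(l−1) = l and w_{i,r}(l) = l−1. -/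
/-- `sw j` is the adjacent transposition `s_j` exchanging `j-1` and `j` (for `j ≥ 2`). -/
def sw (j : ℕ) : Equiv.Perm ℕ := Equiv.swap (j - 1) j

/-- `compSeq f lo len = f lo ∘ f (lo+1) ∘ ⋯ ∘ f (lo+len-1)` (rightmost applied first). -/
def compSeq (f : ℕ → Equiv.Perm ℕ) (lo len : ℕ) : Equiv.Perm ℕ :=
  ((List.range' lo len).map f).prod

/-- `compSeqRev f lo len = f (lo+len-1) ∘ ⋯ ∘ f (lo+1) ∘ f lo`. -/
def compSeqRev (f : ℕ → Equiv.Perm ℕ) (lo len : ℕ) : Equiv.Perm ℕ :=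
  ((List.range' lo len).map f).reverse.prod

/-- Number of inversions of `σ` on `{1,…,c}`. -/
def inversions (c : ℕ) (σ : Equiv.Perm ℕ) : ℕ :=
  ((Finset.Icc 1 c ×ˢ Finset.Icc 1 c).filter fun q => q.1 < q.2 ∧ σ q.2 < σ q.1).card

/-- `μ_i = s_{a+i+1} ∘ ⋯ ∘ s_{a+i+b}`. -/
def mu5 (a b i : ℕ) : Equiv.Perm ℕ := compSeq sw (a + i + 1) b

/-- `w_{i,r} = (s_{a+i+r} ∘ ⋯ ∘ s_{a+i+b}) ∘ (μ_{i−1} ∘ ⋯ ∘ μ_1) ∘ w ∘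
(μ_1⁻¹ ∘ ⋯ ∘ μ_{i−1}⁻¹) ∘ (s_{a+i+b}⁻¹ ∘ ⋯ ∘ s_{a+i+r}⁻¹)`. -/
def wir5 (a b : ℕ) (w : Equiv.Perm ℕ) (i r : ℕ) : Equiv.Perm ℕ :=
  compSeq sw (a + i + r) (b + 1 - r) * compSeqRev (mu5 a b) 1 (i - 1) * w *
    (compSeqRev (mu5 a b) 1 (i - 1))⁻¹ * (compSeq sw (a + i + r) (b + 1 - r))⁻¹


lemma compSeq_succ (f : ℕ → Equiv.Perm ℕ) (lo n : ℕ) :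
    compSeq f lo (n+1) = compSeq f lo n * f (lo + n) := by
  simp [compSeq, List.range'_concat]

lemma compSeqRev_succ (f : ℕ → Equiv.Perm ℕ) (lo n : ℕ) :
    compSeqRev f lo (n+1) = f (lo + n) * compSeqRev f lo n := by
  simp [compSeqRev, List.range'_concat]

lemma cyc_apply (lo len : ℕ) (hlo : 1 ≤ lo) (x : ℕ) :
    compSeq sw lo len x =
      if lo ≤ x + 1 ∧ x + 1 < lo + len then x + 1
      else if x + 1 = lo + len then lo - 1 else x := by
  induction len generalizing x with
  | zero =>
    simp only [compSeq, List.range', List.map_nil, List.prod_nil, Equiv.Perm.one_apply]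
    split_ifs <;> omega
  | succ n ih =>
    rw [compSeq_succ, Equiv.Perm.mul_apply, sw, Equiv.swap_apply_def]
    split_ifs with h1 h2 <;> rw [ih] <;> split_ifs <;> omega

lemma M_apply (a b k x : ℕ) :
    compSeqRev (mu5 a b) 1 k x =
      if a + 1 ≤ x ∧ x ≤ a + b then x + k
      else if a + b + 1 ≤ x ∧ x ≤ a + b + k then x - b else x := by
  induction k generalizing x with
  | zero =>
    simp only [compSeqRev, List.range', List.map_nil, List.reverse_nil, List.prod_nil,
      Equiv.Perm.one_apply]
    split_ifs <;> omega
  | succ n ih =>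
    rw [compSeqRev_succ, Equiv.Perm.mul_apply, ih, mu5,
      cyc_apply _ _ (by omega)]
    split_ifs <;> omega

/-- Layout `{1,…,c} = A₁ ∪ A₂ ∪ B₁ ∪ B₂` with `c = 2a+2b`, `|A₁|=|B₁|=a`,
`|A₂|=|B₂|=b`; `w` exchanges `A_k` and `B_k` order-preservingly; `μ` exchanges `A₂` and `B₁`
order-preservingly.  Then (1) `μ = μ_a ∘ ⋯ ∘ μ_1` and this expression by `a·b` adjacent
transpositions is reduced, i.e. `ℓ(μ) = a·b`; (2) for `1 ≤ i ≤ a` and `1 ≤ r ≤ b`, with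
`l = a+i+r−1` if `r ≥ 2` and `l = a+b+i+1` if `r = 1` and `i ≤ a−1`, the permutation
`w_{i,r}` sends the simple root `e_{l−1}−e_l` to a negative root different from its opposite:
`w_{i,r}(l−1) > w_{i,r}(l)` and not both `w_{i,r}(l−1) = l` and `w_{i,r}(l) = l−1`. -/
theorem stmt_5 (a b : ℕ) (ha : 1 ≤ a) (hb : 1 ≤ b)
    (w μ : Equiv.Perm ℕ)
    (hw : ∀ x : ℕ, w x =
      if 1 ≤ x ∧ x ≤ a + b then x + (a + b)
      else if a + b + 1 ≤ x ∧ x ≤ 2 * a + 2 * b then x - (a + b)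
      else x)
    (hμ : ∀ x : ℕ, μ x =
      if a + 1 ≤ x ∧ x ≤ a + b then x + a
      else if a + b + 1 ≤ x ∧ x ≤ 2 * a + b then x - b
      else x) :
    (μ = compSeqRev (mu5 a b) 1 a ∧ inversions (2 * a + 2 * b) μ = a * b) ∧
    (∀ i r l : ℕ, 1 ≤ i → i ≤ a → 1 ≤ r → r ≤ b →
      ((2 ≤ r ∧ l = a + i + r - 1) ∨ (r = 1 ∧ i ≤ a - 1 ∧ l = a + b + i + 1)) →
      wir5 a b w i r l < wir5 a b w i r (l - 1) ∧
        ¬(wir5 a b w i r (l - 1) = l ∧ wir5 a b w i r l = l - 1)) := by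
  have hT : ∀ i r x : ℕ, 1 ≤ i → compSeq sw (a + i + r) (b + 1 - r) x =
      if a + i + r ≤ x + 1 ∧ x + 1 < a + i + r + (b + 1 - r) then x + 1
      else if x + 1 = a + i + r + (b + 1 - r) then a + i + r - 1 else x := by
    intro i r x hi
    exact cyc_apply _ _ (by omega) x
  constructor
  · constructor
    · ext x
      rw [hμ x, M_apply]
      split_ifs <;> omega
    · have hset : ((Finset.Icc 1 (2 * a + 2 * b) ×ˢ Finset.Icc 1 (2 * a + 2 * b)).filter
          fun q => q.1 < q.2 ∧ μ q.2 < μ q.1)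
          = Finset.Icc (a + 1) (a + b) ×ˢ Finset.Icc (a + b + 1) (2 * a + b) := by
        ext ⟨x, y⟩
        simp only [Finset.mem_filter, Finset.mem_product, Finset.mem_Icc, hμ x, hμ y]
        split_ifs <;> omega
      unfold inversions
      rw [hset, Finset.card_product, Nat.card_Icc, Nat.card_Icc]
      have h1 : a + b + 1 - (a + 1) = b := by omega
      have h2 : 2 * a + b + 1 - (a + b + 1) = a := by omega
      rw [h1, h2, mul_comm]
  · rintro i r l hi1 hi2 hr1 hr2 (⟨hr, hl⟩ | ⟨hr, hia, hl⟩)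
    · subst hl
      have e1 : (compSeq sw (a + i + r) (b + 1 - r))⁻¹ (a + i + r - 1) = a + i + b := by
        rw [Equiv.Perm.inv_eq_iff_eq, hT i r _ hi1]; split_ifs <;> omega
      have e2 : (compSeqRev (mu5 a b) 1 (i - 1))⁻¹ (a + i + b) = a + i + b := by
        rw [Equiv.Perm.inv_eq_iff_eq, M_apply]; split_ifs <;> omega
      have e3 : w (a + i + b) = i := by rw [hw]; split_ifs <;> omega
      have e4 : compSeqRev (mu5 a b) 1 (i - 1) i = i := by
        rw [M_apply]; split_ifs <;> omega
      have e5 : compSeq sw (a + i + r) (b + 1 - r) i = i := by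
        rw [hT i r _ hi1]; split_ifs <;> omega
      have hv1 : wir5 a b w i r (a + i + r - 1) = i := by
        simp only [wir5, Equiv.Perm.mul_apply]
        rw [e1, e2, e3, e4, e5]
      have f1 : (compSeq sw (a + i + r) (b + 1 - r))⁻¹ (a + i + r - 1 - 1)
          = a + i + r - 1 - 1 := by
        rw [Equiv.Perm.inv_eq_iff_eq, hT i r _ hi1]; split_ifs <;> omega
      have f2 : (compSeqRev (mu5 a b) 1 (i - 1))⁻¹ (a + i + r - 1 - 1) = a + r - 1 := by
        rw [Equiv.Perm.inv_eq_iff_eq, M_apply]; split_ifs <;> omega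
      have f3 : w (a + r - 1) = 2 * a + b + r - 1 := by rw [hw]; split_ifs <;> omega
      have f4 : compSeqRev (mu5 a b) 1 (i - 1) (2 * a + b + r - 1) = 2 * a + b + r - 1 := by
        rw [M_apply]; split_ifs <;> omega
      have f5 : compSeq sw (a + i + r) (b + 1 - r) (2 * a + b + r - 1)
          = 2 * a + b + r - 1 := by
        rw [hT i r _ hi1]; split_ifs <;> omega
      have hv2 : wir5 a b w i r (a + i + r - 1 - 1) = 2 * a + b + r - 1 := by
        simp only [wir5, Equiv.Perm.mul_apply]
        rw [f1, f2, f3, f4, f5]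
      rw [hv1, hv2]
      omega
    · subst hr; subst hl
      have e1 : (compSeq sw (a + i + 1) (b + 1 - 1))⁻¹ (a + b + i + 1) = a + b + i + 1 := by
        rw [Equiv.Perm.inv_eq_iff_eq, hT i 1 _ hi1]; split_ifs <;> omega
      have e2 : (compSeqRev (mu5 a b) 1 (i - 1))⁻¹ (a + b + i + 1) = a + b + i + 1 := by
        rw [Equiv.Perm.inv_eq_iff_eq, M_apply]; split_ifs <;> omega
      have e3 : w (a + b + i + 1) = i + 1 := by rw [hw]; split_ifs <;> omega
      have e4 : compSeqRev (mu5 a b) 1 (i - 1) (i + 1) = i + 1 := by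
        rw [M_apply]; split_ifs <;> omega
      have e5 : compSeq sw (a + i + 1) (b + 1 - 1) (i + 1) = i + 1 := by
        rw [hT i 1 _ hi1]; split_ifs <;> omega
      have hv1 : wir5 a b w i 1 (a + b + i + 1) = i + 1 := by
        simp only [wir5, Equiv.Perm.mul_apply]
        rw [e1, e2, e3, e4, e5]
      have f1 : (compSeq sw (a + i + 1) (b + 1 - 1))⁻¹ (a + b + i + 1 - 1)
          = a + b + i - 1 := by
        rw [Equiv.Perm.inv_eq_iff_eq, hT i 1 _ hi1]; split_ifs <;> omega
      have f2 : (compSeqRev (mu5 a b) 1 (i - 1))⁻¹ (a + b + i - 1) = a + b := by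
        rw [Equiv.Perm.inv_eq_iff_eq, M_apply]; split_ifs <;> omega
      have f3 : w (a + b) = 2 * a + 2 * b := by rw [hw]; split_ifs <;> omega
      have f4 : compSeqRev (mu5 a b) 1 (i - 1) (2 * a + 2 * b) = 2 * a + 2 * b := by
        rw [M_apply]; split_ifs <;> omega
      have f5 : compSeq sw (a + i + 1) (b + 1 - 1) (2 * a + 2 * b) = 2 * a + 2 * b := by
        rw [hT i 1 _ hi1]; split_ifs <;> omega
      have hv2 : wir5 a b w i 1 (a + b + i + 1 - 1) = 2 * a + 2 * b := by
        simp only [wir5, Equiv.Perm.mul_apply]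
        rw [f1, f2, f3, f4, f5]
      rw [hv1, hv2]
      omega
end
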